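/- arXiv:2009.04405 — 6 statements merged into one kernel-verified Lean document; each statement's English description precedes it below -/
import Mathlib

section
/- A matrix A ∈ ℝ^{n×n} is a P-matrix (all principal minors positive) if and only if for every x ∈ ℝ^n, the condition x_i (Ax)_i ≤ 0 for all i implies x = 0. -/
open Matrix Finset

def IsPMatrix {n : ℕ} (A : Matrix (Fin n) (Fin n) ℝ) : Prop :=
  ∀ s : Finset (Fin n),
    0 < (A.submatrix (fun i : s => (i : Fin n)) (fun j : s => (j : Fin n))).det

def IsNMatrix {n : ℕ} (A : Matrix (Fin n) (Fin n) ℝ) : Prop :=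
  ∀ s : Finset (Fin n), s.Nonempty →
    (A.submatrix (fun i : s => (i : Fin n)) (fun j : s => (j : Fin n))).det < 0

def IsAlmostPMatrix {n : ℕ} (A : Matrix (Fin n) (Fin n) ℝ) : Prop :=
  (∀ s : Finset (Fin n), s.Nonempty → s ≠ Finset.univ →
    0 < (A.submatrix (fun i : s => (i : Fin n)) (fun j : s => (j : Fin n))).det) ∧
  A.det < 0

def IntervalHull {m n : ℕ} (A B : Matrix (Fin m) (Fin n) ℝ) :
    Set (Matrix (Fin m) (Fin n) ℝ) :=
  {C | ∀ i j, ∃ t : ℝ, t ∈ Set.Icc (0:ℝ) 1 ∧ C i j = t * A i j + (1 - t) * B i j}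

noncomputable def Iu {m n : ℕ} (A B : Matrix (Fin m) (Fin n) ℝ) : Matrix (Fin m) (Fin n) ℝ :=
  fun i j => max (A i j) (B i j)

noncomputable def Il {m n : ℕ} (A B : Matrix (Fin m) (Fin n) ℝ) : Matrix (Fin m) (Fin n) ℝ :=
  fun i j => min (A i j) (B i j)

noncomputable def Ic {m n : ℕ} (A B : Matrix (Fin m) (Fin n) ℝ) : Matrix (Fin m) (Fin n) ℝ :=
  fun i j => (A i j + B i j) / 2

noncomputable def Dlt {m n : ℕ} (A B : Matrix (Fin m) (Fin n) ℝ) : Matrix (Fin m) (Fin n) ℝ :=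
  fun i j => (Iu A B i j - Il A B i j) / 2

noncomputable def Iz {n : ℕ} (A B : Matrix (Fin n) (Fin n) ℝ) (z : Fin n → ℝ) :
    Matrix (Fin n) (Fin n) ℝ :=
  Ic A B - Matrix.diagonal z * Dlt A B * Matrix.diagonal z

def SignVec {n : ℕ} (z : Fin n → ℝ) : Prop := ∀ i, z i = 1 ∨ z i = -1

def BlockPattern {n : ℕ} (A : Matrix (Fin n) (Fin n) ℝ) (J : Finset (Fin n)) : Prop :=
  (∀ i ∈ J, ∀ j ∈ J, A i j < 0) ∧ (∀ i ∉ J, ∀ j ∉ J, A i j < 0) ∧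
  (∀ i ∈ J, ∀ j ∉ J, 0 < A i j) ∧ (∀ i ∉ J, ∀ j ∈ J, 0 < A i j)

def IsNMatrixSecond {n : ℕ} (A : Matrix (Fin n) (Fin n) ℝ) : Prop :=
  IsNMatrix A ∧ ∀ i j, A i j ≤ 0

def IsNMatrixFirst {n : ℕ} (A : Matrix (Fin n) (Fin n) ℝ) (J : Finset (Fin n)) : Prop :=
  IsNMatrix A ∧ BlockPattern A J

def IsAlmostPSecond {n : ℕ} (A : Matrix (Fin n) (Fin n) ℝ) : Prop :=
  IsUnit A.det ∧ IsNMatrix A⁻¹ ∧ ∀ i j, A⁻¹ i j < 0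

def IsAlmostPFirst {n : ℕ} (A : Matrix (Fin n) (Fin n) ℝ) (J : Finset (Fin n)) : Prop :=
  IsUnit A.det ∧ IsNMatrixFirst A⁻¹ J

def InJ {n : ℕ} (J : Finset (Fin n)) (x : Fin n → ℝ) : Prop :=
  (∀ j ∈ J, 0 < x j) ∧ (∀ j ∉ J, x j < 0)

def Semipos {p q : Type*} [Fintype q] (M : Matrix p q ℝ) : Prop :=
  ∃ x : q → ℝ, (∀ j, 0 ≤ x j) ∧ ∀ i, 0 < M.mulVec x i

def MinSemipos {m n : ℕ} (M : Matrix (Fin m) (Fin n) ℝ) : Prop :=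
  Semipos M ∧
  ∀ j₀ : Fin n, ¬ Semipos (M.submatrix id (fun j : {j : Fin n // j ≠ j₀} => (j : Fin n)))

/-! If `A` has positive principal minors, so does `A + D` for every nonnegative diagonal `D`:
multilinearity of the determinant in the rows expands `det (A + D)` as a sum of principal
minors of `A` weighted by products of entries of `D`. A nonzero `x` whose sign `A` reverses
would give, on the support `s` of `x`, a nonnegative diagonal `D` with `(A[s] + D) x = 0`.

Conversely, reversing the sign of no nonzero vector passes to principal submatrices and to
every matrix on the segment from `1` to `A`. All of these are nonsingular, so `det A` has the
sign of `det 1`. -/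

namespace Matrix

variable {ι R : Type*}

theorem det_add_diagonal [Fintype ι] [DecidableEq ι] [CommRing R] (A : Matrix ι ι R)
    (d : ι → R) :
    (A + diagonal d).det =
      ∑ s : Finset ι, (∏ i ∈ sᶜ, d i) * (A.submatrix ((↑) : s → ι) (↑)).det := by
  change detRowAlternating (A.row + (diagonal d).row) = _
  rw [AlternatingMap.map_add_univ]
  refine Finset.sum_congr rfl fun s _ => ?_
  have hrows : s.piecewise A.row (diagonal d).row =
      fun i => (if i ∈ sᶜ then d i else 1) • s.piecewise A.row (1 : Matrix ι ι R).row i := by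
    funext i j
    by_cases hi : i ∈ s <;> simp [Finset.piecewise, hi, row, diagonal_apply, one_apply]
  rw [hrows, AlternatingMap.map_smul_univ, Finset.prod_ite_mem, Finset.univ_inter, smul_eq_mul,
    ← det_piecewise_one_eq_submatrix_det]
  rfl

theorem submatrix_subtype_mulVec {m l : Type*} [Fintype ι] [NonUnitalNonAssocSemiring R]
    (A : Matrix m ι R) (f : l → m) {s : Finset ι} {x : ι → R} (hx : ∀ j ∉ s, x j = 0) :
    A.submatrix f ((↑) : s → ι) *ᵥ (fun j => x j) = fun i => (A *ᵥ x) (f i) := by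
  funext i
  simp only [mulVec, dotProduct, submatrix_apply]
  rw [Finset.sum_coe_sort s (fun j => A (f i) j * x j)]
  exact Finset.sum_subset (Finset.subset_univ s) fun j _ hj => by rw [hx j hj, mul_zero]

def PosPrincipalMinors [DecidableEq ι] [CommRing R] [PartialOrder R] (A : Matrix ι ι R) : Prop :=
  ∀ s : Finset ι, 0 < (A.submatrix ((↑) : s → ι) (↑)).det

def NoSignReversal [Fintype ι] [NonUnitalNonAssocSemiring R] [Preorder R] (A : Matrix ι ι R) :
    Prop :=
  ∀ x : ι → R, (∀ i, x i * (A *ᵥ x) i ≤ 0) → x = 0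

namespace PosPrincipalMinors

variable [DecidableEq ι]

theorem submatrix [CommRing R] [PartialOrder R] {A : Matrix ι ι R} (hA : PosPrincipalMinors A)
    (s : Finset ι) : PosPrincipalMinors (A.submatrix ((↑) : s → ι) (↑)) := fun t =>
  (hA (t.map (Function.Embedding.subtype _))).trans_eq
    (det_submatrix_equiv_self (t.equivMap (Function.Embedding.subtype _)) _).symm

variable [Fintype ι]

theorem det_add_diagonal_pos [CommRing R] [PartialOrder R] [IsStrictOrderedRing R]
    {A : Matrix ι ι R} (hA : PosPrincipalMinors A) {d : ι → R} (hd : ∀ i, 0 ≤ d i) :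
    0 < (A + diagonal d).det := by
  rw [det_add_diagonal]
  refine Finset.sum_pos' (fun s _ => mul_nonneg (Finset.prod_nonneg fun i _ => hd i) (hA s).le)
    ⟨Finset.univ, Finset.mem_univ _, ?_⟩
  simpa using hA Finset.univ

variable [Field R] [LinearOrder R] [IsStrictOrderedRing R] {A : Matrix ι ι R}

theorem isEmpty_of_forall_mul_mulVec_nonpos (hA : PosPrincipalMinors A) {x : ι → R}
    (hx0 : ∀ i, x i ≠ 0) (hx : ∀ i, x i * (A *ᵥ x) i ≤ 0) : IsEmpty ι := by
  set d : ι → R := fun i => -(A *ᵥ x) i / x i with d_def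
  have hd : ∀ i, 0 ≤ d i := fun i => by
    have : d i = -(x i * (A *ᵥ x) i) / (x i * x i) := by
      rw [← mul_neg, mul_div_mul_left _ _ (hx0 i)]
    exact this ▸ div_nonneg (neg_nonneg.2 (hx i)) (mul_self_nonneg _)
  have hker : (A + diagonal d) *ᵥ x = 0 := by
    funext i
    rw [add_mulVec, Pi.add_apply, mulVec_diagonal, d_def, div_mul_cancel₀ _ (hx0 i),
      add_neg_cancel, Pi.zero_apply]
  have := eq_zero_of_mulVec_eq_zero (hA.det_add_diagonal_pos hd).ne' hker
  exact ⟨fun i => hx0 i (congrFun this i)⟩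

theorem noSignReversal (hA : PosPrincipalMinors A) : NoSignReversal A := by
  intro x hx
  let s := Finset.univ.filter fun i => x i ≠ 0
  have hxs : ∀ j ∉ s, x j = 0 := fun j hj => by simpa [s] using hj
  have hmulVec := submatrix_subtype_mulVec A ((↑) : s → ι) hxs
  have hs : IsEmpty s := (hA.submatrix s).isEmpty_of_forall_mul_mulVec_nonpos
    (fun j => (Finset.mem_filter.1 j.2).2) fun j => by rw [hmulVec]; exact hx j
  funext i
  by_contra hi
  exact hs.elim ⟨i, by simpa [s] using hi⟩

end PosPrincipalMinors

namespace NoSignReversal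

variable [Fintype ι]

theorem submatrix [NonUnitalNonAssocSemiring R] [Preorder R] {A : Matrix ι ι R}
    (hA : NoSignReversal A) (s : Finset ι) : NoSignReversal (A.submatrix ((↑) : s → ι) (↑)) := by
  classical
  intro y hy
  let x : ι → R := fun i => if h : i ∈ s then y ⟨i, h⟩ else 0
  have hxs : ∀ j ∉ s, x j = 0 := fun j hj => dif_neg hj
  have hxy : (fun j : s => x j) = y := funext fun j => dif_pos j.2
  have hmulVec := submatrix_subtype_mulVec A ((↑) : s → ι) hxs
  rw [hxy] at hmulVec
  have hx0 : x = 0 := hA x fun i => by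
    by_cases hi : i ∈ s
    · simpa [x, hi, hmulVec] using hy ⟨i, hi⟩
    · simp [hxs i hi]
  rw [← hxy, hx0]
  rfl

theorem det_ne_zero [DecidableEq ι] [CommRing R] [IsDomain R] [Preorder R] {A : Matrix ι ι R}
    (hA : NoSignReversal A) : A.det ≠ 0 := fun h => by
  obtain ⟨y, hy0, hy⟩ := exists_mulVec_eq_zero_iff.2 h
  exact hy0 (hA y fun i => by simp [hy])

theorem of_mem_segment [DecidableEq ι] [Field R] [LinearOrder R] [IsStrictOrderedRing R]
    {A : Matrix ι ι R} (hA : NoSignReversal A) {B : Matrix ι ι R} (hB : B ∈ segment R 1 A) :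
    NoSignReversal B := by
  obtain ⟨a, b, ha, hb, hab, rfl⟩ := hB
  intro y hy
  have hy' : ∀ i, a * (y i * y i) + b * (y i * (A *ᵥ y) i) ≤ 0 := fun i => by
    have := hy i
    simp only [add_mulVec, smul_mulVec, one_mulVec, Pi.add_apply, Pi.smul_apply,
      smul_eq_mul] at this
    linarith
  rcases hb.eq_or_lt with rfl | hb
  · rw [add_zero] at hab
    subst hab
    funext i
    exact mul_self_eq_zero.1 (le_antisymm (by simpa using hy' i) (mul_self_nonneg _))
  · exact hA y fun i => by nlinarith [hy' i, mul_nonneg ha (mul_self_nonneg (y i))]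

theorem det_pos [DecidableEq ι] {A : Matrix ι ι ℝ} (hA : NoSignReversal A) : 0 < A.det := by
  by_contra! hneg
  obtain ⟨B, hB, hdet⟩ := (convex_segment (1 : Matrix ι ι ℝ) A).isPreconnected.intermediate_value
    (right_mem_segment ℝ 1 A) (left_mem_segment ℝ 1 A) continuous_id.matrix_det.continuousOn
    ⟨hneg, by simp⟩
  exact (hA.of_mem_segment hB).det_ne_zero hdet

end NoSignReversal

theorem posPrincipalMinors_iff_noSignReversal [Fintype ι] [DecidableEq ι] {A : Matrix ι ι ℝ} :
    PosPrincipalMinors A ↔ NoSignReversal A :=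
  ⟨PosPrincipalMinors.noSignReversal, fun hA s => (hA.submatrix s).det_pos⟩

end Matrix

theorem stmt0 {n : ℕ} (A : Matrix (Fin n) (Fin n) ℝ) :
    IsPMatrix A ↔ ∀ x : Fin n → ℝ, (∀ i, x i * A.mulVec x i ≤ 0) → x = 0 :=
  posPrincipalMinors_iff_noSignReversal
end

section
/- Let A, B ∈ ℝ^{n×n} and x ∈ ℝ^n. Choose z ∈ {±1}^n with z_i = 1 if x_i ≥ 0 and z_i = −1 if x_i < 0. Then for every C in the interval hull I(A,B) and every index i, x_i (Cx)_i ≥ x_i (I_z x)_i, where I_z = I_c − D_z Δ D_z with I_c = (A+B)/2, Δ = (I_u − I_l)/2, D_z = diag(z). -/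
/-!
Entrywise, `C i j` lies within `Dlt A B i j` of the midpoint `Ic A B i j`, so
`x i * x j * C i j ≥ x i * x j * Ic A B i j - |x i| * |x j| * Dlt A B i j`. The choice of `z`
makes `z k * x k = |x k|`, and the right-hand side is then exactly `x i * x j * Iz A B z i j`.
Summing over `j` gives the inequality.
-/

open Matrix Finset

lemma abs_convexComb_sub_midpoint_le {a b t : ℝ} (ht : t ∈ Set.Icc (0 : ℝ) 1) :
    |t * a + (1 - t) * b - (a + b) / 2| ≤ |a - b| / 2 := by
  have hrw : t * a + (1 - t) * b - (a + b) / 2 = (t - 1 / 2) * (a - b) := by ring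
  have ht' : |t - 1 / 2| ≤ 1 / 2 := abs_le.2 ⟨by linarith [ht.1], by linarith [ht.2]⟩
  rw [hrw, abs_mul]
  nlinarith [abs_nonneg (a - b)]

lemma Dlt_apply {m n : ℕ} (A B : Matrix (Fin m) (Fin n) ℝ) (i : Fin m) (j : Fin n) :
    Dlt A B i j = |A i j - B i j| / 2 := by
  rw [Dlt, Iu, Il, max_sub_min_eq_abs']

lemma abs_sub_Ic_le_Dlt {m n : ℕ} {A B C : Matrix (Fin m) (Fin n) ℝ}
    (hC : C ∈ IntervalHull A B) (i : Fin m) (j : Fin n) :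
    |C i j - Ic A B i j| ≤ Dlt A B i j := by
  obtain ⟨t, ht, hCij⟩ := hC i j
  rw [hCij, Dlt_apply]
  exact abs_convexComb_sub_midpoint_le ht

lemma Iz_apply {n : ℕ} (A B : Matrix (Fin n) (Fin n) ℝ) (z : Fin n → ℝ) (i j : Fin n) :
    Iz A B z i j = Ic A B i j - z i * Dlt A B i j * z j := by
  simp [Iz, Matrix.sub_apply, mul_apply, diagonal, sum_ite_eq, sum_ite_eq']

lemma mul_sub_abs_mul_le_of_abs_sub_le {a b c m d : ℝ} (h : |c - m| ≤ d) :
    a * b * m - |a| * |b| * d ≤ a * b * c := by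
  have hprod : |a * b * (c - m)| ≤ |a| * |b| * d := by
    rw [abs_mul, abs_mul]
    exact mul_le_mul_of_nonneg_left h (by positivity)
  linarith [neg_abs_le (a * b * (c - m))]

lemma mul_eq_abs_of_sign {x z : ℝ} (hpos : 0 ≤ x → z = 1) (hneg : x < 0 → z = -1) :
    z * x = |x| := by
  rcases le_or_gt 0 x with h | h
  · rw [hpos h, one_mul, abs_of_nonneg h]
  · rw [hneg h, abs_of_neg h, neg_one_mul]

theorem stmt3 {n : ℕ} (A B : Matrix (Fin n) (Fin n) ℝ) (x : Fin n → ℝ)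
    (z : Fin n → ℝ) (hz : ∀ i, (0 ≤ x i → z i = 1) ∧ (x i < 0 → z i = -1)) :
    ∀ C ∈ IntervalHull A B, ∀ i, x i * (Iz A B z).mulVec x i ≤ x i * C.mulVec x i := by
  intro C hC i
  have hzx : ∀ k, z k * x k = |x k| := fun k => mul_eq_abs_of_sign (hz k).1 (hz k).2
  simp only [mulVec, dotProduct, mul_sum]
  refine sum_le_sum fun j _ => ?_
  calc x i * (Iz A B z i j * x j)
      = x i * x j * Ic A B i j - (z i * x i) * (z j * x j) * Dlt A B i j := by
        rw [Iz_apply]; ring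
    _ = x i * x j * Ic A B i j - |x i| * |x j| * Dlt A B i j := by rw [hzx, hzx]
    _ ≤ x i * x j * C i j := mul_sub_abs_mul_le_of_abs_sub_le (abs_sub_Ic_le_Dlt hC i j)
    _ = x i * (C i j * x j) := by ring
end

section
/- A matrix A ∈ ℝ^{n×n} is an N-matrix of the second category if and only if all entries of A are negative and for every x ∈ ℝ^n with x_i (Ax)_i ≤ 0 for all i, one has x ≤ 0 or x ≥ 0. -/
open Matrix Finset

/-!
Say that `A` reverses the sign of `x` if `x i * (A *ᵥ x) i ≤ 0` for every `i`.

If `A` is an N-matrix with negative entries, induct on the size: a sign-reversed vector with a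
zero entry lives on a smaller principal submatrix. A sign-reversed `z` without zero entries solves
`(A + diagonal d) *ᵥ z = 0` for some `d ≥ 0`; as `det (A + diagonal d)` is affine in each `d i`
with slope a smaller principal minor, it is negative once some `d i = 0`, so all the products
`z i * (A *ᵥ z) i` are strictly negative. If `z` had entries of both signs, shrinking a positive
entry to `0` while keeping the sign reversal contradicts this or the induction hypothesis.

Conversely, if all proper principal minors of `B` are negative but `det B ≥ 0`, then `B` reverses
the sign of a column of `adjugate B`, which has a negative entry but is not `≤ 0`.
-/

open Function

section SignReversal

variable {ι κ : Type*}

def ReversesSign [Fintype ι] (A : Matrix ι ι ℝ) (x : ι → ℝ) : Prop :=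
  ∀ i, x i * (A *ᵥ x) i ≤ 0

def IsUnisigned (x : ι → ℝ) : Prop :=
  (∀ i, x i ≤ 0) ∨ ∀ i, 0 ≤ x i

def OnlyReversesUnisigned [Fintype ι] (A : Matrix ι ι ℝ) : Prop :=
  ∀ x, ReversesSign A x → IsUnisigned x

lemma mulVec_pos_of_nonpos [Fintype κ] {A : Matrix ι κ ℝ} (hA : ∀ i j, A i j < 0) {x : κ → ℝ}
    (hx : ∀ j, x j ≤ 0) {j : κ} (hj : x j < 0) (i : ι) : 0 < (A *ᵥ x) i :=
  Finset.sum_pos' (fun k _ => mul_nonneg_of_nonpos_of_nonpos (hA i k).le (hx k))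
    ⟨j, Finset.mem_univ j, mul_pos_of_neg_of_neg (hA i j) hj⟩

lemma submatrix_mulVec_comp [Fintype ι] [Fintype κ] (A : Matrix ι ι ℝ) {f : κ → ι}
    (hf : Injective f) {x : ι → ℝ} (hx : ∀ j ∉ Set.range f, x j = 0) (i : κ) :
    (A.submatrix f f *ᵥ (x ∘ f)) i = (A *ᵥ x) (f i) :=
  Fintype.sum_of_injective f hf _ _ (fun j hj => by simp [hx j hj]) (fun _ => rfl)

lemma reversesSign_submatrix_comp_iff [Fintype ι] [Fintype κ] {A : Matrix ι ι ℝ} {f : κ → ι}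
    (hf : Injective f) {x : ι → ℝ} (hx : ∀ j ∉ Set.range f, x j = 0) :
    ReversesSign (A.submatrix f f) (x ∘ f) ↔ ReversesSign A x := by
  simp only [ReversesSign, submatrix_mulVec_comp A hf hx, Function.comp_apply]
  refine ⟨fun h j => ?_, fun h i => h (f i)⟩
  by_cases hj : j ∈ Set.range f
  · obtain ⟨i, rfl⟩ := hj
    exact h i
  · simp [hx j hj]

lemma isUnisigned_comp_iff {f : κ → ι} {x : ι → ℝ} (hx : ∀ j ∉ Set.range f, x j = 0) :
    IsUnisigned (x ∘ f) ↔ IsUnisigned x := by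
  have key (p : ℝ → Prop) (h0 : p 0) : (∀ i, p (x (f i))) ↔ ∀ j, p (x j) := by
    refine ⟨fun h j => ?_, fun h i => h (f i)⟩
    by_cases hj : j ∈ Set.range f
    · obtain ⟨i, rfl⟩ := hj
      exact h i
    · rw [hx j hj]
      exact h0
  exact or_congr (key (· ≤ 0) le_rfl) (key (0 ≤ ·) le_rfl)

lemma OnlyReversesUnisigned.submatrix [Fintype ι] [Fintype κ] {A : Matrix ι ι ℝ}
    (hA : OnlyReversesUnisigned A) {f : κ → ι} (hf : Injective f) :
    OnlyReversesUnisigned (A.submatrix f f) := by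
  intro x hx
  have hext : ∀ j ∉ Set.range f, extend f x 0 j = 0 := fun j hj => extend_apply' _ _ _ hj
  rw [← extend_comp hf x 0] at hx ⊢
  rw [isUnisigned_comp_iff hext]
  exact hA _ ((reversesSign_submatrix_comp_iff hf hext).1 hx)

lemma isUnisigned_of_submatrix [Fintype ι] [Fintype κ] {A : Matrix ι ι ℝ} {f : κ → ι}
    (hf : Injective f) (hA : OnlyReversesUnisigned (A.submatrix f f)) {x : ι → ℝ}
    (hrev : ReversesSign A x) (hx : ∀ j ∉ Set.range f, x j = 0) : IsUnisigned x :=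
  (isUnisigned_comp_iff hx).1 (hA _ ((reversesSign_submatrix_comp_iff hf hx).2 hrev))

end SignReversal

lemma det_add_diagonal_single {n R : Type*} [Fintype n] [DecidableEq n] [CommRing R]
    (N : Matrix n n R) (j : n) (c : R) :
    (N + diagonal (Pi.single j c)).det = N.det + c * N.adjugate j j := by
  have hrow : N + diagonal (Pi.single j c) = N.updateRow j (N j + c • Pi.single j 1) := by
    ext a b
    by_cases ha : a = j
    · subst ha
      by_cases hb : a = b <;> simp [hb, eq_comm]
    · simp [diagonal_apply, ha]
  rw [hrow, det_updateRow_add, updateRow_eq_self, det_updateRow_smul, adjugate_apply]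

lemma det_add_diagonal_single_fin {k : ℕ} {R : Type*} [CommRing R]
    (N : Matrix (Fin (k + 1)) (Fin (k + 1)) R) (j : Fin (k + 1)) (c : R) :
    (N + diagonal (Pi.single j c)).det
      = N.det + c * (N.submatrix j.succAbove j.succAbove).det := by
  rw [det_add_diagonal_single, adjugate_fin_succ_eq_det_submatrix, ← two_mul, pow_mul]
  simp

section NegPrincipalMinors

variable {ι κ : Type*}

def NegPrincipalMinors (A : Matrix ι ι ℝ) : Prop :=
  ∀ (m : ℕ) (f : Fin (m + 1) → ι), Injective f → (A.submatrix f f).det < 0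

lemma NegPrincipalMinors.submatrix {A : Matrix ι ι ℝ} (hA : NegPrincipalMinors A) {f : κ → ι}
    (hf : Injective f) : NegPrincipalMinors (A.submatrix f f) := fun m g hg => by
  rw [submatrix_submatrix]
  exact hA m (f ∘ g) (hf.comp hg)

lemma NegPrincipalMinors.apply_neg {A : Matrix ι ι ℝ} (hA : NegPrincipalMinors A)
    (hnonpos : ∀ i j, A i j ≤ 0) (i j : ι) : A i j < 0 := by
  have hdiag : ∀ i, A i i < 0 := fun i => by
    simpa [det_unique] using hA 0 (fun _ => i) fun a b _ => Subsingleton.elim (α := Fin 1) a b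
  refine (hnonpos i j).lt_of_ne fun h0 => ?_
  rcases eq_or_ne i j with rfl | hij
  · exact (hdiag i).ne h0
  have h2 := hA 1 ![i, j] fun a b => by fin_cases a <;> fin_cases b <;> simp [hij, hij.symm]
  rw [det_fin_two] at h2
  simp only [submatrix_apply, Matrix.cons_val_zero, Matrix.cons_val_one, h0, zero_mul,
    sub_zero] at h2
  nlinarith [hdiag i, hdiag j]

lemma NegPrincipalMinors.det_neg {k : ℕ} {A : Matrix (Fin (k + 1)) (Fin (k + 1)) ℝ}
    (hA : NegPrincipalMinors A) : A.det < 0 := by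
  simpa using hA k id injective_id

lemma NegPrincipalMinors.det_add_diagonal_neg : ∀ {k : ℕ} {A : Matrix (Fin k) (Fin k) ℝ},
    NegPrincipalMinors A → ∀ {d : Fin k → ℝ}, (∀ i, 0 ≤ d i) → ∀ {i₀ : Fin k}, d i₀ = 0 →
    (A + diagonal d).det < 0
  | 0, _, _, _, _, i₀, _ => i₀.elim0
  | k + 1, A, hA, d, hd, i₀, hi₀ => by
    suffices ∀ s : Finset (Fin (k + 1)), (A + diagonal (s.piecewise d 0)).det < 0 by
      simpa using this univ
    intro s
    induction s using Finset.induction_on with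
    | empty => simpa using hA.det_neg
    | insert j s hj ih =>
      set e := s.piecewise d 0
      have he0 : ∀ i, 0 ≤ e i := fun i => by by_cases hi : i ∈ s <;> simp [e, hi, hd i]
      have hsplit : (insert j s).piecewise d 0 = e + Pi.single j (d j) := by
        ext i
        by_cases hi : i = j
        · subst hi
          simp [e, hj]
        · simp [e, hi]
      have hminor : d j * ((A + diagonal e).submatrix j.succAbove j.succAbove).det ≤ 0 := by
        rcases eq_or_ne j i₀ with rfl | hj₀
        · simp [hi₀]
        obtain ⟨i₁, hi₁⟩ := Fin.exists_succAbove_eq hj₀.symm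
        have hsub : (A + diagonal e).submatrix j.succAbove j.succAbove
            = A.submatrix j.succAbove j.succAbove + diagonal (e ∘ j.succAbove) := by
          rw [← submatrix_diagonal _ _ Fin.succAbove_right_injective]
          rfl
        rw [hsub]
        refine mul_nonpos_of_nonneg_of_nonpos (hd j) (det_add_diagonal_neg
          (hA.submatrix Fin.succAbove_right_injective) (fun i => he0 _) (i₀ := i₁) ?_).le
        by_cases hi : i₀ ∈ s <;> simp [e, hi₁, hi₀, hi]
      have hdiag : diagonal (e + Pi.single j (d j)) = diagonal e + diagonal (Pi.single j (d j)) :=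
        (diagonal_add _ _).symm
      rw [hsplit, hdiag, ← add_assoc, det_add_diagonal_single_fin]
      linarith

end NegPrincipalMinors

lemma exists_convexComb_nonpos_of_neg {ι : Type*} [Fintype ι] (a b : ι → ℝ)
    (ha : ∀ i, a i < 0) :
    ∃ t ∈ Set.Icc (0 : ℝ) 1, (∀ i, (1 - t) * a i + t * b i ≤ 0) ∧
      (t < 1 → ∃ i, (1 - t) * a i + t * b i = 0) := by
  by_cases hb : ∀ i, b i ≤ 0
  · exact ⟨1, ⟨zero_le_one, le_rfl⟩, fun i => by simpa using hb i, fun h => (lt_irrefl 1 h).elim⟩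
  push Not at hb
  obtain ⟨j, hj⟩ := hb
  set S := Finset.univ.filter fun i => 0 < b i
  have hS : S.Nonempty := ⟨j, by simp [S, hj]⟩
  -- `r i` is where the segment from `a i` to `b i` crosses zero.
  set r : ι → ℝ := fun i => a i / (a i - b i)
  have hr : ∀ i ∈ S, 0 < b i ∧ r i * (a i - b i) = a i := fun i hi => by
    have hbi : 0 < b i := by simpa [S] using hi
    exact ⟨hbi, div_mul_cancel₀ _ (by linarith [ha i])⟩
  obtain ⟨i₀, hi₀, ht⟩ := S.exists_mem_eq_inf' hS r
  obtain ⟨hb₀, hr₀⟩ := hr i₀ hi₀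
  have ht0 : 0 < r i₀ := div_pos_of_neg_of_neg (ha i₀) (by linarith [ha i₀])
  have ht1 : r i₀ < 1 := by nlinarith [ha i₀]
  refine ⟨r i₀, ⟨ht0.le, ht1.le⟩, fun i => ?_, fun _ => ⟨i₀, by linear_combination -hr₀⟩⟩
  by_cases hi : i ∈ S
  · obtain ⟨hbi, hri⟩ := hr i hi
    have hle : r i₀ ≤ r i := ht ▸ S.inf'_le r hi
    nlinarith [ha i]
  · have hbi : b i ≤ 0 := by simpa [S] using hi
    nlinarith [ha i]

section

variable {k : ℕ} {A : Matrix (Fin k) (Fin k) ℝ}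

lemma NegPrincipalMinors.mul_mulVec_neg (hA : NegPrincipalMinors A) {z : Fin k → ℝ}
    (hz : ∀ i, z i ≠ 0) (hrev : ReversesSign A z) (i₀ : Fin k) : z i₀ * (A *ᵥ z) i₀ < 0 := by
  refine (hrev i₀).lt_of_ne fun h => ?_
  -- `d ≥ 0` is chosen so that `(A + diagonal d) *ᵥ z = 0`, and `d i₀ = 0`.
  set d : Fin k → ℝ := fun i => -(z i * (A *ᵥ z) i) / z i ^ 2
  have hker : (A + diagonal d) *ᵥ z = 0 := by
    ext i
    have hzi := hz i
    simp only [add_mulVec, mulVec_diagonal, Pi.add_apply, Pi.zero_apply, d]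
    field_simp
    ring
  have hdet : (A + diagonal d).det = 0 :=
    exists_mulVec_eq_zero_iff.1 ⟨z, fun h0 => hz i₀ (congrFun h0 i₀), hker⟩
  have hneg := hA.det_add_diagonal_neg (d := d)
    (fun i => div_nonneg (neg_nonneg.2 (hrev i)) (sq_nonneg _)) (i₀ := i₀) (by simp [d, h])
  linarith

/-- Shrink a positive entry `z p` to `0` along `w = (1 - t) z + t z₀` as long as `A` reverses
the sign of `w`. Either some `w i * (A *ᵥ w) i` vanishes while `w` has no zero entry, or `w`
reaches `z₀`; then `z₀ ≤ 0` by `hzero`, so `(A *ᵥ z₀) p > 0`, whereas the construction keeps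
`z p * (A *ᵥ z₀) p ≤ 0`. -/
lemma NegPrincipalMinors.isUnisigned_of_ne_zero (hA : NegPrincipalMinors A)
    (hneg : ∀ i j, A i j < 0)
    (hzero : ∀ w, ReversesSign A w → (∃ i, w i = 0) → IsUnisigned w) {z : Fin k → ℝ}
    (hz : ∀ i, z i ≠ 0) (hrev : ReversesSign A z) : IsUnisigned z := by
  by_contra hmixed
  obtain ⟨⟨p, hp⟩, ⟨q, hq⟩⟩ : (∃ p, 0 < z p) ∧ ∃ q, z q < 0 := by
    simpa [IsUnisigned, not_or] using hmixed
  set z₀ := update z p 0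
  obtain ⟨t, ⟨ht0, ht1⟩, hnonpos, htight⟩ := exists_convexComb_nonpos_of_neg
    (fun i => z i * (A *ᵥ z) i) (fun i => z i * (A *ᵥ z₀) i) (hA.mul_mulVec_neg hz hrev)
  set w := (1 - t) • z + t • z₀
  have hzw : ∀ i, z i * (A *ᵥ w) i
      = (1 - t) * (z i * (A *ᵥ z) i) + t * (z i * (A *ᵥ z₀) i) := fun i => by
    simp only [w, mulVec_add, mulVec_smul, Pi.add_apply, Pi.smul_apply, smul_eq_mul]
    ring
  have hwp : w p = (1 - t) * z p := by simp [w, z₀]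
  have hwi : ∀ i ≠ p, w i = z i := fun i hi => by simp [w, z₀, hi]; ring
  have hw : ∀ i, w i * (A *ᵥ w) i = (if i = p then 1 - t else 1) * (z i * (A *ᵥ w) i) := by
    intro i
    by_cases hi : i = p
    · subst hi
      rw [hwp, if_pos rfl, mul_assoc]
    · rw [hwi i hi, if_neg hi, one_mul]
  have hwrev : ReversesSign A w := fun i => by
    rw [hw, hzw]
    exact mul_nonpos_of_nonneg_of_nonpos (by split_ifs <;> linarith) (hnonpos i)
  rcases ht1.lt_or_eq with ht1 | rfl
  · obtain ⟨i₁, hi₁⟩ := htight ht1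
    have hw0 : ∀ i, w i ≠ 0 := fun i => by
      by_cases hi : i = p
      · subst hi
        rw [hwp]
        exact mul_ne_zero (by linarith) (hz i)
      · rw [hwi i hi]
        exact hz i
    have := hA.mul_mulVec_neg hw0 hwrev i₁
    rw [hw, hzw, hi₁, mul_zero] at this
    exact lt_irrefl 0 this
  · have hwz₀ : w = z₀ := by simp [w]
    rw [hwz₀] at hwrev
    have hqp : q ≠ p := by rintro rfl; linarith
    have hq₀ : z₀ q < 0 := by simpa [z₀, hqp] using hq
    have hz₀ : ∀ i, z₀ i ≤ 0 :=
      (hzero z₀ hwrev ⟨p, by simp [z₀]⟩).resolve_right fun h => (h q).not_gt hq₀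
    have hpos := mulVec_pos_of_nonpos hneg hz₀ hq₀ p
    have := hnonpos p
    simp only [sub_self, zero_mul, one_mul, zero_add] at this
    nlinarith

theorem NegPrincipalMinors.onlyReversesUnisigned : ∀ {k : ℕ} {A : Matrix (Fin k) (Fin k) ℝ},
    NegPrincipalMinors A → (∀ i j, A i j < 0) → OnlyReversesUnisigned A
  | 0, _, _, _ => fun _ _ => Or.inl fun i => i.elim0
  | k + 1, A, hA, hneg => by
    have hzero : ∀ w, ReversesSign A w → (∃ i, w i = 0) → IsUnisigned w := by
      rintro w hw ⟨i₀, hi₀⟩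
      have hsa : Injective i₀.succAbove := Fin.succAbove_right_injective
      refine isUnisigned_of_submatrix hsa
        (onlyReversesUnisigned (hA.submatrix hsa) fun _ _ => hneg _ _) hw fun j hj => ?_
      rw [Fin.range_succAbove, Set.mem_compl_iff, not_not, Set.mem_singleton_iff] at hj
      rwa [hj]
    intro z hz
    by_cases h : ∃ i, z i = 0
    · exact hzero z hz h
    · push Not at h
      exact hA.isUnisigned_of_ne_zero hneg hzero h hz

end

/-- The column `x` of `adjugate B` at `0` satisfies `B *ᵥ x = det B • e₀` and `x 0 < 0`; if
`det B ≥ 0` then `B` reverses the sign of `x`, so `x ≤ 0` and `(B *ᵥ x) 1 > 0`. -/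
lemma det_neg_of_onlyReversesUnisigned {m : ℕ} {B : Matrix (Fin (m + 2)) (Fin (m + 2)) ℝ}
    (hneg : ∀ i j, B i j < 0) (hB : OnlyReversesUnisigned B)
    (hminor : ∀ i : Fin (m + 2), (B.submatrix i.succAbove i.succAbove).det < 0) : B.det < 0 := by
  by_contra! hdet
  set x : Fin (m + 2) → ℝ := fun i => B.adjugate i 0
  have hBx : ∀ i, (B *ᵥ x) i = if i = 0 then B.det else 0 := fun i => by
    simpa [x, mul_apply, mulVec, dotProduct, one_apply] using
      congrFun (congrFun (mul_adjugate B) i) 0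
  have hx0 : x 0 < 0 := by
    simpa [x, adjugate_fin_succ_eq_det_submatrix] using hminor 0
  have hrev : ReversesSign B x := fun i => by
    rw [hBx]
    split_ifs with hi
    · subst hi
      exact mul_nonpos_of_nonpos_of_nonneg hx0.le hdet
    · rw [mul_zero]
  have hxle := (hB x hrev).resolve_right fun h => (h 0).not_gt hx0
  have hpos := mulVec_pos_of_nonpos hneg hxle hx0 1
  rw [hBx, if_neg one_ne_zero] at hpos
  exact lt_irrefl 0 hpos

theorem OnlyReversesUnisigned.negPrincipalMinors {ι : Type*} [Fintype ι] {A : Matrix ι ι ℝ}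
    (hneg : ∀ i j, A i j < 0) (hA : OnlyReversesUnisigned A) : NegPrincipalMinors A := by
  intro m
  induction m with
  | zero => exact fun f _ => by simpa [det_unique] using hneg (f 0) (f 0)
  | succ m ih =>
    intro f hf
    refine det_neg_of_onlyReversesUnisigned (fun _ _ => hneg _ _) (hA.submatrix hf) fun i => ?_
    rw [submatrix_submatrix]
    exact ih _ (hf.comp Fin.succAbove_right_injective)


lemma isNMatrix_iff_negPrincipalMinors {n : ℕ} {A : Matrix (Fin n) (Fin n) ℝ} :
    IsNMatrix A ↔ NegPrincipalMinors A := by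
  constructor
  · intro hA m f hf
    let s : Finset (Fin n) := (Set.range f).toFinset
    let e : Fin (m + 1) ≃ s :=
      (Equiv.ofInjective f hf).trans (Equiv.subtypeEquivRight fun _ => Set.mem_toFinset.symm)
    have hsub : A.submatrix f f
        = (A.submatrix (fun i : s => (i : Fin n)) fun j : s => (j : Fin n)).submatrix e e :=
      rfl
    rw [hsub, det_submatrix_equiv_self]
    exact hA s ⟨f 0, Set.mem_toFinset.2 ⟨0, rfl⟩⟩
  · intro hA s hs
    obtain ⟨m, hm⟩ := Nat.exists_eq_succ_of_ne_zero hs.card_pos.ne'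
    let e := s.equivFinOfCardEq hm
    have hsub : A.submatrix (fun i : s => (i : Fin n)) (fun j : s => (j : Fin n))
        = (A.submatrix (fun i => (e.symm i : Fin n)) fun j => (e.symm j : Fin n)).submatrix e e :=
      by
      ext
      simp
    rw [hsub, det_submatrix_equiv_self]
    exact hA m _ (Subtype.coe_injective.comp e.symm.injective)

theorem stmt4 {n : ℕ} (A : Matrix (Fin n) (Fin n) ℝ) :
    IsNMatrixSecond A ↔
      ((∀ i j, A i j < 0) ∧
        ∀ x : Fin n → ℝ, (∀ i, x i * A.mulVec x i ≤ 0) →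
          (∀ i, x i ≤ 0) ∨ (∀ i, 0 ≤ x i)) := by
  rw [IsNMatrixSecond, isNMatrix_iff_negPrincipalMinors]
  constructor
  · rintro ⟨hA, hnonpos⟩
    have hneg := hA.apply_neg hnonpos
    exact ⟨hneg, hA.onlyReversesUnisigned hneg⟩
  · rintro ⟨hneg, hA⟩
    exact ⟨OnlyReversesUnisigned.negPrincipalMinors hneg hA, fun i j => (hneg i j).le⟩
end

section
/- Let A ∈ ℝ^{n×n} be an N-matrix of the first category (an N-matrix having at least one positive entry). Then there is a nonempty proper subset J of {1,…,n} such that, after partitioning A into blocks A_{JJ}, A_{JJ^c}, A_{J^cJ}, A_{J^cJ^c}, one has A_{JJ} < 0, A_{J^cJ^c} < 0, A_{JJ^c} > 0, and A_{J^cJ} > 0 entrywise. -/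
open Matrix Finset

/-! The principal minors of orders one, two and three give `A i i < 0`, `0 < A i j * A j i`
for `i ≠ j`, and `A a i * A a j * A i j < 0` for all `a, i, j`. So the sign of `A i j` is minus
the product of the signs of `A a i` and `A a j`; taking for `a` a row with a positive entry, the
set `J = {j | A a j < 0}` contains `a` but not the column of that entry, and carries the sign
pattern. -/

namespace IsNMatrix

variable {n : ℕ} {A : Matrix (Fin n) (Fin n) ℝ}

theorem det_submatrix_neg (hA : IsNMatrix A) {ι : Type*} [Fintype ι] [DecidableEq ι]
    [Nonempty ι] {f : ι → Fin n} (hf : Function.Injective f) :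
    (A.submatrix f f).det < 0 := by
  classical
  let e : ι ≃ (univ.image f : Finset (Fin n)) :=
    (Equiv.ofInjective f hf).trans (Equiv.setCongr (by simp))
  have hsub := Matrix.det_submatrix_equiv_self e
    (A.submatrix (fun i : (univ.image f : Finset (Fin n)) => (i : Fin n)) (↑))
  have hminor := hA _ (univ_nonempty.image f)
  rw [← hsub] at hminor
  exact hminor

theorem apply_self_neg (hA : IsNMatrix A) (i : Fin n) : A i i < 0 := by
  have hdet := hA.det_submatrix_neg (Function.injective_of_subsingleton ![i])
  rwa [Matrix.det_fin_one] at hdet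

theorem mul_sub_mul_neg (hA : IsNMatrix A) {i j : Fin n} (hij : i ≠ j) :
    A i i * A j j - A i j * A j i < 0 := by
  have hdet := hA.det_submatrix_neg (f := ![i, j]) (by
    intro x y; fin_cases x <;> fin_cases y <;> simp [hij, hij.symm])
  rw [Matrix.det_fin_two] at hdet
  simpa using hdet

theorem mul_apply_swap_pos (hA : IsNMatrix A) {i j : Fin n} (hij : i ≠ j) :
    0 < A i j * A j i := by
  linarith [hA.mul_sub_mul_neg hij,
    mul_pos_of_neg_of_neg (hA.apply_self_neg i) (hA.apply_self_neg j)]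

theorem apply_ne_zero (hA : IsNMatrix A) {i j : Fin n} (hij : i ≠ j) : A i j ≠ 0 :=
  left_ne_zero_of_mul (hA.mul_apply_swap_pos hij).ne'

/-- The two cycle products `A a i A i j A j a` and `A a j A j i A i a` have the sign of
`A a i A a j A i j`, and the other four terms of the expansion of the principal minor on
`{a, i, j}` are positive, so the negativity of that minor forces this sign to be negative. -/
theorem mul_mul_neg_of_ne (hA : IsNMatrix A) {a i j : Fin n} (hai : a ≠ i) (haj : a ≠ j)
    (hij : i ≠ j) : A a i * A a j * A i j < 0 := by
  have hdet := hA.det_submatrix_neg (f := ![a, i, j]) (by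
    intro x y; fin_cases x <;> fin_cases y <;> simp [hai, haj, hij, hai.symm, haj.symm, hij.symm])
  have hai' := hA.mul_apply_swap_pos hai
  have haj' := hA.mul_apply_swap_pos haj
  have hij' := hA.mul_apply_swap_pos hij
  set c₁ := A a i * A i j * A j a
  set c₂ := A a j * A j i * A i a
  have hcycles : c₁ + c₂ < 0 := by
    have hexpand : (A.submatrix ![a, i, j] ![a, i, j]).det =
        A a a * (A i i * A j j - A i j * A j i) + -A i i * (A a j * A j a) +
          -A j j * (A a i * A i a) + c₁ + c₂ := by
      rw [Matrix.det_fin_three]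
      simp only [submatrix_apply, cons_val_zero, cons_val_one, Matrix.cons_val, c₁, c₂]
      ring
    have := mul_pos_of_neg_of_neg (hA.apply_self_neg a) (hA.mul_sub_mul_neg hij)
    have := mul_pos (neg_pos.2 (hA.apply_self_neg i)) haj'
    have := mul_pos (neg_pos.2 (hA.apply_self_neg j)) hai'
    linarith
  have hsame : 0 < c₁ * c₂ := by
    have : c₁ * c₂ = (A a i * A i a) * (A a j * A j a) * (A i j * A j i) := by ring
    rw [this]; positivity
  have hc₁ : c₁ < 0 := by
    rcases pos_and_pos_or_neg_and_neg_of_mul_pos hsame with h | h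
    · linarith [h.1, h.2]
    · exact h.1
  have hsign : 0 < c₁ * (A a i * A a j * A i j) := by
    have : c₁ * (A a i * A a j * A i j) = A a i ^ 2 * A i j ^ 2 * (A a j * A j a) := by ring
    rw [this]
    have := hA.apply_ne_zero hai
    have := hA.apply_ne_zero hij
    positivity
  exact neg_of_mul_pos_right hsign hc₁.le

theorem mul_mul_neg (hA : IsNMatrix A) (a i j : Fin n) : A a i * A a j * A i j < 0 := by
  have ha := hA.apply_self_neg a
  rcases eq_or_ne a i with rfl | hai
  · rcases eq_or_ne a j with rfl | haj
    · nlinarith [mul_self_pos.2 ha.ne]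
    · nlinarith [mul_self_pos.2 (hA.apply_ne_zero haj)]
  rcases eq_or_ne a j with rfl | haj
  · nlinarith [hA.mul_apply_swap_pos hai]
  rcases eq_or_ne i j with rfl | hij
  · nlinarith [hA.apply_self_neg i, mul_self_pos.2 (hA.apply_ne_zero hai)]
  exact hA.mul_mul_neg_of_ne hai haj hij

end IsNMatrix

theorem blockPattern_filter_neg {n : ℕ} {A : Matrix (Fin n) (Fin n) ℝ} {x : Fin n → ℝ}
    (h : ∀ i j, x i * x j * A i j < 0) : BlockPattern A (univ.filter (x · < 0)) := by
  simp only [BlockPattern, mem_filter, mem_univ, true_and, not_lt]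
  refine ⟨fun i hi j hj => ?_, fun i hi j hj => ?_, fun i hi j hj => ?_, fun i hi j hj => ?_⟩
  · exact neg_of_mul_neg_right (h i j) (mul_pos_of_neg_of_neg hi hj).le
  · exact neg_of_mul_neg_right (h i j) (mul_nonneg hi hj)
  · exact pos_of_mul_neg_right (h i j) (mul_nonpos_of_nonpos_of_nonneg hi.le hj)
  · exact pos_of_mul_neg_right (h i j) (mul_nonpos_of_nonneg_of_nonpos hi hj.le)

theorem stmt5 {n : ℕ} (A : Matrix (Fin n) (Fin n) ℝ)
    (hN : IsNMatrix A) (hpos : ∃ i j, 0 < A i j) :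
    ∃ J : Finset (Fin n), J.Nonempty ∧ J ≠ Finset.univ ∧ BlockPattern A J := by
  obtain ⟨a, b, hab⟩ := hpos
  refine ⟨univ.filter (A a · < 0), ⟨a, by simpa using hN.apply_self_neg a⟩, ?_,
    blockPattern_filter_neg (hN.mul_mul_neg a)⟩
  intro huniv
  have hb : b ∈ univ.filter (A a · < 0) := by rw [huniv]; exact mem_univ b
  exact (mem_filter.1 hb).2.not_gt hab
end

section
/- Let A ∈ ℝ^{n×n} with n ≥ 2 be invertible. Then A is an almost P-matrix (all proper principal minors positive, det A < 0) if and only if A^{-1} is an N-matrix (all principal minors negative). -/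
open Matrix Finset

/-! Jacobi's formula `det (A⁻¹)[s,s] * det A = det A[sᶜ,sᶜ]` relates each principal minor of `A⁻¹`
to the complementary principal minor of `A`. If `A` is almost P, the complementary minor is
positive (it is `1` when `s` is everything) while `det A < 0`, so every principal minor of `A⁻¹`
is negative. Conversely, taking `s = univ` gives `det A⁻¹ * det A = 1`, hence `det A < 0`, and
then every proper principal minor of `A` is a product of two negative numbers. -/

namespace Matrix

variable {ι R : Type*} [DecidableEq ι] [CommRing R]

def principalMinor (A : Matrix ι ι R) (s : Finset ι) : R :=
  (A.submatrix (fun i : s => (i : ι)) (fun j : s => (j : ι))).det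

theorem principalMinor_empty (A : Matrix ι ι R) : A.principalMinor ∅ = 1 :=
  det_isEmpty

variable [Fintype ι]

theorem det_eq_principalMinor_of_apply_eq_one_apply {A : Matrix ι ι R} (s : Finset ι)
    (h : ∀ i, ∀ j ∉ s, A i j = (1 : Matrix ι ι R) i j) :
    A.det = A.principalMinor s := by
  have hblock : ∀ i ∈ s, ∀ j ∉ s, A i j = 0 := fun i hi j hj ↦ by
    rw [h i j hj, one_apply_ne (ne_of_mem_of_not_mem hi hj)]
  have hid : toSquareBlockProp A (· ∉ s) = 1 := by
    ext i j
    simp [toSquareBlockProp_def, h _ _ j.2, one_apply, Subtype.ext_iff]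
  rw [twoBlockTriangular_det' A (· ∈ s) hblock, hid, det_one, mul_one, principalMinor,
    toSquareBlockProp_def]
  congr! 1

theorem principalMinor_inv_mul_det {A : Matrix ι ι R} (hA : IsUnit A.det) (s : Finset ι) :
    A⁻¹.principalMinor s * A.det = A.principalMinor sᶜ := by
  -- `B` takes its columns in `s` from `A⁻¹` and the others from `1`, so `A * B` takes its
  -- columns in `s` from `1` and the others from `A`.
  let B : Matrix ι ι R := of fun i j ↦ if j ∈ s then A⁻¹ i j else (1 : Matrix ι ι R) i j
  have hAB : ∀ i j, (A * B) i j = if j ∈ s then (1 : Matrix ι ι R) i j else A i j := by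
    intro i j
    by_cases hj : j ∈ s
    · simp [B, hj, ← mul_nonsing_inv A hA, mul_apply]
    · simp [B, hj, mul_apply, one_apply]
  have hB : B.det = A⁻¹.principalMinor s := by
    rw [det_eq_principalMinor_of_apply_eq_one_apply s (by simp +contextual [B])]
    refine congrArg det (ext fun i j ↦ ?_)
    simp [B, j.2]
  have hAB' : (A * B).det = A.principalMinor sᶜ := by
    rw [det_eq_principalMinor_of_apply_eq_one_apply sᶜ (by simp +contextual [hAB])]
    refine congrArg det (ext fun i j ↦ ?_)
    simp [hAB, mem_compl.1 j.2]
  rw [← hB, mul_comm, ← det_mul, hAB']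

end Matrix

theorem stmt10 {n : ℕ} (hn : 2 ≤ n) (A : Matrix (Fin n) (Fin n) ℝ)
    (hA : IsUnit A.det) :
    IsAlmostPMatrix A ↔ IsNMatrix A⁻¹ := by
  have : Nonempty (Fin n) := ⟨⟨0, by omega⟩⟩
  have jacobi := principalMinor_inv_mul_det hA
  constructor
  · rintro ⟨hminor, hdet⟩ s hs
    have hpos : 0 < A.principalMinor sᶜ := by
      rcases sᶜ.eq_empty_or_nonempty with hc | hc
      · rw [hc, principalMinor_empty]
        exact one_pos
      · exact hminor sᶜ hc ((compl_ne_univ_iff_nonempty s).2 hs)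
    exact neg_of_mul_pos_left (jacobi s ▸ hpos) hdet.le
  · intro hN
    have hdet : A.det < 0 := by
      have h := jacobi univ
      rw [compl_univ, principalMinor_empty] at h
      exact neg_of_mul_pos_right (h ▸ one_pos) (hN univ univ_nonempty).le
    refine ⟨fun s _ hsu ↦ ?_, hdet⟩
    have h := jacobi sᶜ
    rw [compl_compl] at h
    have hc : sᶜ.Nonempty := nonempty_iff_ne_empty.2 ((compl_eq_empty_iff s).not.2 hsu)
    show 0 < A.principalMinor s
    exact h ▸ mul_pos_of_neg_of_neg (hN sᶜ hc) hdet
end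

section
/- Let J be a nonempty proper subset of {1,…,n} and define 𝕁 = {x ∈ ℝ^n : x_j > 0 for j ∈ J, x_j < 0 for j ∉ J}. If A is an almost P-matrix of the first category with respect to J, then there exists x ∈ 𝕁 with Ax ∈ −𝕁. -/
open Matrix Finset

/-!
Let `s` be the sign vector of the orthant `𝕁` (`+1` on `J`, `-1` off `J`). In row `i ∈ J` of
`A⁻¹` the entries are negative on `J` and positive off `J`, so every term of `(A⁻¹ (-s))ᵢ` is positive; symmetrically for `i ∉ J`. Hence
`x = A⁻¹ (-s) ∈ 𝕁` while `A x = -s ∈ -𝕁`.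
-/

def orthantSign {n : ℕ} (J : Finset (Fin n)) : Fin n → ℝ :=
  fun j => if j ∈ J then 1 else -1

lemma inJ_orthantSign {n : ℕ} (J : Finset (Fin n)) : InJ J (orthantSign J) := by
  constructor <;> intro j hj <;> simp [orthantSign, hj]

lemma BlockPattern.inJ_mulVec_neg_orthantSign {n : ℕ} {B : Matrix (Fin n) (Fin n) ℝ}
    {J : Finset (Fin n)} (hB : BlockPattern B J) : InJ J (B *ᵥ -orthantSign J) := by
  obtain ⟨hJJ, hcc, hJc, hcJ⟩ := hB
  simp only [InJ, mulVec, dotProduct, Pi.neg_apply, orthantSign, mul_neg, mul_ite, mul_one]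
  constructor
  · intro i hi
    refine sum_pos (fun j _ => ?_) ⟨i, mem_univ i⟩
    by_cases hj : j ∈ J
    · simpa [hj] using hJJ i hi j hj
    · simpa [hj] using hJc i hi j hj
  · intro i hi
    refine sum_neg (fun j _ => ?_) ⟨i, mem_univ i⟩
    by_cases hj : j ∈ J
    · simpa [hj] using hcJ i hi j hj
    · simpa [hj] using hcc i hi j hj

theorem stmt14_general {n : ℕ} (J : Finset (Fin n)) (A : Matrix (Fin n) (Fin n) ℝ)
    (hA : IsAlmostPFirst A J) :
    ∃ x : Fin n → ℝ, InJ J x ∧ InJ J (-(A.mulVec x)) := by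
  obtain ⟨hdet, -, hpattern⟩ := hA
  refine ⟨A⁻¹ *ᵥ -orthantSign J, hpattern.inJ_mulVec_neg_orthantSign, ?_⟩
  rw [mulVec_mulVec, mul_nonsing_inv A hdet, one_mulVec, neg_neg]
  exact inJ_orthantSign J

theorem stmt14 {n : ℕ} (J : Finset (Fin n)) (hJ : J.Nonempty)
    (hJ2 : J ≠ Finset.univ) (A : Matrix (Fin n) (Fin n) ℝ)
    (hA : IsAlmostPFirst A J) :
    ∃ x : Fin n → ℝ, InJ J x ∧ InJ J (-(A.mulVec x)) :=
  stmt14_general J A hA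
end
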